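/- arXiv:1908.05675 — 5 statements merged into one kernel-verified Lean document; each statement's English description precedes it below -/
import Mathlib

section
/- Let Δ > 0 and assume condition (condL). Then the function L(x,y) := x^u · y^v · ((a₀/v)x² + (a₁/(v+1))xy + (b₂/u)y²), defined for x, y > 0 using real-exponent powers, is a first integral of the cubic vector field X: for every x, y > 0, the Lie derivative vanishes, i.e. (∂L/∂x)(x,y) · x(a₀x²+a₁xy+a₂y²) − (∂L/∂y)(x,y) · y(b₀x²+b₁xy+b₂y²) = 0. -/
/-!
Write `Q = α x² + β x y + γ y²` with `α = a₀/v`, `β = a₁/(v+1)`, `γ = b₂/u`, and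
`P, R` for the two quadratic forms of `X`, so that `X = (x P, -y R)` and `L = x^u y^v Q`.
Then `∂ₓL = x^(u-1) y^v (u Q + x ∂ₓQ)` and `∂ᵧL = x^u y^(v-1) (v Q + y ∂ᵧQ)`. The definitions
of `u, v` give `a₀ (u + 2) = b₀ v` and `a₂ u = b₂ (v + 2)`, which together with (condL) say
exactly that `u Q + x ∂ₓQ = R` and `v Q + y ∂ᵧQ = P`. Hence the Lie derivative is
`x^u y^v (R P - P R) = 0`.
-/

theorem hasDerivAt_rpow_mul {f : ℝ → ℝ} {f' x : ℝ} (p : ℝ) (hx : 0 < x)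
    (hf : HasDerivAt f f' x) :
    HasDerivAt (fun s => s ^ p * f s) (x ^ (p - 1) * (p * f x + x * f')) x := by
  refine ((Real.hasDerivAt_rpow_const (p := p) (Or.inl hx.ne')).mul hf).congr_deriv ?_
  rw [Real.rpow_sub_one hx.ne']
  field_simp

theorem hasDerivAt_rpow_mul_quadratic {x : ℝ} (p α β γ t : ℝ) (hx : 0 < x) :
    HasDerivAt (fun s => s ^ p * (α * s ^ 2 + β * s * t + γ * t ^ 2))
      (x ^ (p - 1) * ((p + 2) * α * x ^ 2 + (p + 1) * β * x * t + p * γ * t ^ 2)) x := by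
  have hQ : HasDerivAt (fun s => α * s ^ 2 + β * s * t + γ * t ^ 2) (α * (2 * x) + β * t) x := by
    simpa using (((hasDerivAt_pow 2 x).const_mul α).add
      (((hasDerivAt_id x).const_mul β).mul_const t)).add_const (γ * t ^ 2)
  convert hasDerivAt_rpow_mul p hx hQ using 2
  ring

theorem deriv_rpow_mul_rpow_mul_quadratic_fst {x : ℝ} (y u v α β γ : ℝ) (hx : 0 < x) :
    deriv (fun s => s ^ u * y ^ v * (α * s ^ 2 + β * s * y + γ * y ^ 2)) x =
      x ^ (u - 1) * y ^ v * ((u + 2) * α * x ^ 2 + (u + 1) * β * x * y + u * γ * y ^ 2) := by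
  have hL : (fun s => s ^ u * y ^ v * (α * s ^ 2 + β * s * y + γ * y ^ 2)) =
      fun s => y ^ v * (s ^ u * (α * s ^ 2 + β * s * y + γ * y ^ 2)) := by
    funext s; ring
  rw [hL, ((hasDerivAt_rpow_mul_quadratic u α β γ y hx).const_mul _).deriv]
  ring

theorem deriv_rpow_mul_rpow_mul_quadratic_snd {y : ℝ} (x u v α β γ : ℝ) (hy : 0 < y) :
    deriv (fun s => x ^ u * s ^ v * (α * x ^ 2 + β * x * s + γ * s ^ 2)) y =
      x ^ u * y ^ (v - 1) * (v * α * x ^ 2 + (v + 1) * β * x * y + (v + 2) * γ * y ^ 2) := by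
  have hL : (fun s => x ^ u * s ^ v * (α * x ^ 2 + β * x * s + γ * s ^ 2)) =
      fun s => x ^ u * (s ^ v * (γ * s ^ 2 + β * s * x + α * x ^ 2)) := by
    funext s; ring
  rw [hL, ((hasDerivAt_rpow_mul_quadratic v γ β α x hy).const_mul _).deriv]
  ring

theorem first_integral_cubic_saddle_general
    (a₀ a₁ a₂ b₀ b₁ b₂ : ℝ)
    (ha₀ : 0 < a₀) (ha₂ : 0 < a₂) (hb₀ : 0 < b₀) (hb₂ : 0 < b₂)
    (c₀ c₂ Δ u v : ℝ)
    (hc₀ : c₀ = a₀ + b₀) (hc₂ : c₂ = a₂ + b₂)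
    (hΔdef : Δ = a₂ * b₀ - a₀ * b₂)
    (hΔ : 0 < Δ)
    (hu : u = 2 * b₂ * c₀ / Δ) (hv : v = 2 * a₀ * c₂ / Δ)
    (hcondL : b₁ * (v + 1) = a₁ * (u + 1)) :
    ∀ x y : ℝ, 0 < x → 0 < y →
      deriv (fun s : ℝ => s ^ u * y ^ v *
          (a₀ / v * s ^ 2 + a₁ / (v + 1) * s * y + b₂ / u * y ^ 2)) x *
        (x * (a₀ * x ^ 2 + a₁ * x * y + a₂ * y ^ 2))
      - deriv (fun s : ℝ => x ^ u * s ^ v *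
          (a₀ / v * x ^ 2 + a₁ / (v + 1) * x * s + b₂ / u * s ^ 2)) y *
        (y * (b₀ * x ^ 2 + b₁ * x * y + b₂ * y ^ 2)) = 0 := by
  intro x y hx hy
  subst hc₀ hc₂ hu hv
  have hu₀ : 0 < 2 * b₂ * (a₀ + b₀) / Δ := by positivity
  have hv₀ : 0 < 2 * a₀ * (a₂ + b₂) / Δ := by positivity
  rw [deriv_rpow_mul_rpow_mul_quadratic_fst y _ _ _ _ _ hx,
    deriv_rpow_mul_rpow_mul_quadratic_snd x _ _ _ _ _ hy]
  set u := 2 * b₂ * (a₀ + b₀) / Δ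
  set v := 2 * a₀ * (a₂ + b₂) / Δ
  have hb₀' : (u + 2) * (a₀ / v) = b₀ := by
    simp only [u, v]; field_simp; rw [hΔdef]; ring
  have ha₂' : (v + 2) * (b₂ / u) = a₂ := by
    simp only [u, v]; field_simp; rw [hΔdef]; ring
  have hb₁' : (u + 1) * (a₁ / (v + 1)) = b₁ := by
    field_simp; linarith
  rw [hb₀', ha₂', hb₁', mul_div_cancel₀ _ hu₀.ne', mul_div_cancel₀ _ hv₀.ne',
    mul_div_cancel₀ _ (by positivity : v + 1 ≠ 0), Real.rpow_sub_one hx.ne',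
    Real.rpow_sub_one hy.ne']
  field_simp
  ring

/-- If `Δ > 0` and condition (condL) holds, then
`L(x,y) = x^u y^v (a₀/v x² + a₁/(v+1) xy + b₂/u y²)` (real-exponent powers)
is a first integral of the cubic vector field `X`: its Lie derivative along `X`
vanishes for all `x, y > 0`. -/
theorem first_integral_cubic_saddle
    (a₀ a₁ a₂ b₀ b₁ b₂ : ℝ)
    (ha₀ : 0 < a₀) (ha₂ : 0 < a₂) (hb₀ : 0 < b₀) (hb₂ : 0 < b₂)
    (c₀ c₁ c₂ Δ u v : ℝ)
    (hc₀ : c₀ = a₀ + b₀) (hc₁ : c₁ = a₁ + b₁) (hc₂ : c₂ = a₂ + b₂)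
    (hΔdef : Δ = a₂ * b₀ - a₀ * b₂)
    (hdisc : c₁ ^ 2 < 4 * c₀ * c₂)
    (hΔ : 0 < Δ)
    (hu : u = 2 * b₂ * c₀ / Δ) (hv : v = 2 * a₀ * c₂ / Δ)
    (hcondL : b₁ * (v + 1) = a₁ * (u + 1)) :
    ∀ x y : ℝ, 0 < x → 0 < y →
      deriv (fun s : ℝ => s ^ u * y ^ v *
          (a₀ / v * s ^ 2 + a₁ / (v + 1) * s * y + b₂ / u * y ^ 2)) x *
        (x * (a₀ * x ^ 2 + a₁ * x * y + a₂ * y ^ 2))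
      - deriv (fun s : ℝ => x ^ u * s ^ v *
          (a₀ / v * x ^ 2 + a₁ / (v + 1) * x * s + b₂ / u * s ^ 2)) y *
        (y * (b₀ * x ^ 2 + b₁ * x * y + b₂ * y ^ 2)) = 0 :=
  first_integral_cubic_saddle_general a₀ a₁ a₂ b₀ b₁ b₂ ha₀ ha₂ hb₀ hb₂ c₀ c₂ Δ u v hc₀ hc₂ hΔdef hΔ
    hu hv hcondL
end

section
/- Assume Δ > 0. Let x, y, ξ, η > 0 satisfy the level-set equation x^u · y^v · (c₀x² + c₁xy + c₂y²) = ξ^u · η^v · (c₀ξ² + c₁ξη + c₂η²), and set M := y/x. Then x² = ξ^{1/β₂} · η^{1/β₀} · M^{−1/β₀} · ((c₀ξ² + c₁ξη + c₂η²)/(c₀ + c₁M + c₂M²))^{1 − 1/(2β₀) − 1/(2β₂)}. -/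
/-!
Put `y = M x`. The level equation becomes `x ^ (u + v + 2) * M ^ v * Q(M) = ξ ^ u * η ^ v * Q(ξ, η)`
with `Q(M) = c₀ + c₁ M + c₂ M²`, which has no real root because its discriminant is negative.
Hence `x ^ (u + v + 2)` is a product of real powers of `ξ`, `η`, `M` and `Q(ξ, η) / Q(M)`, and
raising it to the power `2 / (u + v + 2)` gives `x²`. The exponents simplify because
`u + v + 2 = 2 c₀ c₂ / Δ`, so that `2u / (u + v + 2) = 1 / β₂`, `2v / (u + v + 2) = 1 / β₀`
and `2 / (u + v + 2) = Δ / (c₀ c₂) = 1 - 1 / (2β₀) - 1 / (2β₂)`.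
-/

open Real

lemma quadratic_ne_zero_of_sq_lt_four_mul {c₀ c₁ c₂ : ℝ} (hdisc : c₁ ^ 2 < 4 * c₀ * c₂) (M : ℝ) :
    c₀ + c₁ * M + c₂ * M ^ 2 ≠ 0 := by
  have h := quadratic_ne_zero_of_discrim_ne_sq (a := c₂) (b := c₁) (c := c₀)
    (fun s hs ↦ by rw [discrim] at hs; nlinarith [sq_nonneg s]) M
  contrapose! h
  linear_combination h

lemma rpow_mul_rpow_mul_quadratic {x : ℝ} (hx : 0 < x) {M : ℝ} (hM : 0 ≤ M) (u v c₀ c₁ c₂ : ℝ) :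
    x ^ u * (M * x) ^ v * (c₀ * x ^ 2 + c₁ * x * (M * x) + c₂ * (M * x) ^ 2)
      = x ^ (u + v + 2) * M ^ v * (c₀ + c₁ * M + c₂ * M ^ 2) := by
  rw [mul_rpow hM hx.le, rpow_add hx, rpow_add hx, rpow_two]
  ring

lemma sq_eq_of_rpow_mul_eq {x M A B P Q u v p q r : ℝ} (hx : 0 < x) (hM : 0 < M) (hA : 0 < A)
    (hB : 0 < B) (hQ : Q ≠ 0) (h : x ^ (u + v + 2) * M ^ v * Q = A ^ u * B ^ v * P)
    (hp : (u + v + 2) * p = 2 * u) (hq : (u + v + 2) * q = 2 * v)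
    (hr : (u + v + 2) * r = 2) :
    x ^ 2 = A ^ p * B ^ q * M ^ (-q) * (P / Q) ^ r := by
  have hS : u + v + 2 ≠ 0 := left_ne_zero_of_mul (hr ▸ two_ne_zero)
  have hR : P / Q = x ^ (u + v + 2) * M ^ v / (A ^ u * B ^ v) := by
    field_simp
    linear_combination h.symm
  have hRpos : 0 < P / Q := hR ▸ by positivity
  have hlogR : log (P / Q) = (u + v + 2) * log x + v * log M - u * log A - v * log B := by
    rw [hR, log_div (by positivity) (by positivity), log_mul (by positivity) (by positivity),
      log_mul (by positivity) (by positivity), log_rpow hx, log_rpow hM, log_rpow hA,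
      log_rpow hB]
    ring
  refine log_injOn_pos (by positivity : (0 : ℝ) < x ^ 2) (by positivity : (0 : ℝ) < _) ?_
  refine mul_left_cancel₀ hS ?_
  rw [log_mul (by positivity) (by positivity), log_mul (by positivity) (by positivity),
    log_mul (by positivity) (by positivity), log_rpow hA, log_rpow hB, log_rpow hM,
    log_rpow hRpos, hlogR, log_pow]
  push_cast
  linear_combination (-log A) * hp - (log B - log M) * hq
    - ((u + v + 2) * log x + v * log M - u * log A - v * log B) * hr

lemma level_set_exponents {a₀ a₂ b₀ b₂ c₀ c₂ Δ u v β₀ β₂ : ℝ}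
    (hc₀ : c₀ = a₀ + b₀) (hc₂ : c₂ = a₂ + b₂) (hΔdef : Δ = a₂ * b₀ - a₀ * b₂)
    (hc₀_ne : c₀ ≠ 0) (hc₂_ne : c₂ ≠ 0) (hΔ_ne : Δ ≠ 0)
    (hu : u = 2 * b₂ * c₀ / Δ) (hv : v = 2 * a₀ * c₂ / Δ)
    (hβ₀ : β₀ = (a₀ + b₀) / (2 * a₀)) (hβ₂ : β₂ = (a₂ + b₂) / (2 * b₂)) :
    (u + v + 2) * (1 / β₂) = 2 * u ∧ (u + v + 2) * (1 / β₀) = 2 * v ∧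
      (u + v + 2) * (1 - 1 / (2 * β₀) - 1 / (2 * β₂)) = 2 := by
  have hS : u + v + 2 = 2 * c₀ * c₂ / Δ := by
    rw [hu, hv]
    field_simp
    rw [hc₀, hc₂, hΔdef]
    ring
  rw [← hc₀] at hβ₀
  rw [← hc₂] at hβ₂
  subst hβ₀ hβ₂ hu hv
  refine ⟨?_, ?_, ?_⟩ <;> rw [hS] <;> field_simp
  rw [hΔdef, hc₀, hc₂]
  ring

theorem level_set_solve_x_sq_general
    (a₀ a₂ b₀ b₂ : ℝ)
    (c₀ c₁ c₂ Δ u v β₀ β₂ : ℝ)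
    (hc₀ : c₀ = a₀ + b₀) (hc₂ : c₂ = a₂ + b₂)
    (hΔdef : Δ = a₂ * b₀ - a₀ * b₂) (hΔ : 0 < Δ)
    (hdisc : c₁ ^ 2 < 4 * c₀ * c₂)
    (hu : u = 2 * b₂ * c₀ / Δ) (hv : v = 2 * a₀ * c₂ / Δ)
    (hβ₀ : β₀ = (a₀ + b₀) / (2 * a₀)) (hβ₂ : β₂ = (a₂ + b₂) / (2 * b₂))
    (x y ξ η : ℝ) (hx : 0 < x) (hy : 0 < y) (hξ : 0 < ξ) (hη : 0 < η)
    (hlevel : x ^ u * y ^ v * (c₀ * x ^ 2 + c₁ * x * y + c₂ * y ^ 2)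
      = ξ ^ u * η ^ v * (c₀ * ξ ^ 2 + c₁ * ξ * η + c₂ * η ^ 2))
    (M : ℝ) (hM : M = y / x) :
    x ^ 2 = ξ ^ (1 / β₂) * η ^ (1 / β₀) * M ^ (-(1 / β₀)) *
      ((c₀ * ξ ^ 2 + c₁ * ξ * η + c₂ * η ^ 2) / (c₀ + c₁ * M + c₂ * M ^ 2))
        ^ (1 - 1 / (2 * β₀) - 1 / (2 * β₂)) := by
  have hc₀c₂ : c₀ * c₂ ≠ 0 := by nlinarith [sq_nonneg c₁]
  obtain ⟨hp, hq, hr⟩ := level_set_exponents hc₀ hc₂ hΔdef (left_ne_zero_of_mul hc₀c₂)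
    (right_ne_zero_of_mul hc₀c₂) hΔ.ne' hu hv hβ₀ hβ₂
  have hMpos : 0 < M := hM ▸ div_pos hy hx
  have hy' : y = M * x := by rw [hM, div_mul_cancel₀ y hx.ne']
  rw [hy', rpow_mul_rpow_mul_quadratic hx hMpos.le] at hlevel
  exact sq_eq_of_rpow_mul_eq hx hMpos hξ hη (quadratic_ne_zero_of_sq_lt_four_mul hdisc M) hlevel hp hq hr

/-- For `Δ > 0`, on a level set of the first integral
(`x^u y^v (c₀x² + c₁xy + c₂y²) = ξ^u η^v (c₀ξ² + c₁ξη + c₂η²)`), writing `M = y/x`,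
one can solve for `x²`:
`x² = ξ^{1/β₂} η^{1/β₀} M^{−1/β₀} ((c₀ξ² + c₁ξη + c₂η²)/(c₀ + c₁M + c₂M²))^{1 − 1/(2β₀) − 1/(2β₂)}`. -/
theorem level_set_solve_x_sq
    (a₀ a₁ a₂ b₀ b₁ b₂ : ℝ)
    (ha₀ : 0 < a₀) (ha₂ : 0 < a₂) (hb₀ : 0 < b₀) (hb₂ : 0 < b₂)
    (c₀ c₁ c₂ Δ u v β₀ β₂ : ℝ)
    (hc₀ : c₀ = a₀ + b₀) (hc₁ : c₁ = a₁ + b₁) (hc₂ : c₂ = a₂ + b₂)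
    (hΔdef : Δ = a₂ * b₀ - a₀ * b₂) (hΔ : 0 < Δ)
    (hdisc : c₁ ^ 2 < 4 * c₀ * c₂)
    (hu : u = 2 * b₂ * c₀ / Δ) (hv : v = 2 * a₀ * c₂ / Δ)
    (hβ₀ : β₀ = (a₀ + b₀) / (2 * a₀)) (hβ₂ : β₂ = (a₂ + b₂) / (2 * b₂))
    (x y ξ η : ℝ) (hx : 0 < x) (hy : 0 < y) (hξ : 0 < ξ) (hη : 0 < η)
    (hlevel : x ^ u * y ^ v * (c₀ * x ^ 2 + c₁ * x * y + c₂ * y ^ 2)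
      = ξ ^ u * η ^ v * (c₀ * ξ ^ 2 + c₁ * ξ * η + c₂ * η ^ 2))
    (M : ℝ) (hM : M = y / x) :
    x ^ 2 = ξ ^ (1 / β₂) * η ^ (1 / β₀) * M ^ (-(1 / β₀)) *
      ((c₀ * ξ ^ 2 + c₁ * ξ * η + c₂ * η ^ 2) / (c₀ + c₁ * M + c₂ * M ^ 2))
        ^ (1 - 1 / (2 * β₀) - 1 / (2 * β₂)) :=
  level_set_solve_x_sq_general a₀ a₂ b₀ b₂ c₀ c₁ c₂ Δ u v β₀ β₂ hc₀ hc₂ hΔdef hΔ hdisc hu hv hβ₀ hβ₂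
    x y ξ η hx hy hξ hη hlevel M hM
end

section
/- Assume Δ > 0 and condition (condL). Let T > 0 and let (x,y) be a solution of X on [0,T] with x(t), y(t) > 0 for all t, x(0) = ξ, y(0) = η, x(T) = ζ₀, y(T) = ω. Then ∫_{ω/ζ₀}^{η/ξ} M^{1/β₀ − 1} (c₀ + c₁M + c₂M²)^{−(1/(2β₀) + 1/(2β₂))} dM = G(ξ,η) · T, where G(ξ,η) := ξ^{1/β₂} η^{1/β₀} (c₀ξ² + c₁ξη + c₂η²)^{1 − 1/(2β₀) − 1/(2β₂)}. -/
/-!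
With `P = c₀x² + c₁xy + c₂y²`, condition (condL) is exactly what makes
`H = x^{1/β₂} y^{1/β₀} P^{1 - 1/(2β₀) - 1/(2β₂)}` a first integral of `X`: its logarithmic
derivative along `X` is a multiple of `b₁(v+1) - a₁(u+1)`. The ratio `M = y/x` satisfies
`M' = -M P(x,y)` and `P(x,y) = x²(c₀ + c₁M + c₂M²)`, so `M'` times the integrand at `M` equals
`-H(x,y) = -H(ξ,η)`; substituting `M = y/x` turns the integral into `∫₀ᵀ H(ξ,η) dt`.
-/

open Set Real intervalIntegral

theorem integral_eq_mul_of_deriv_mul_comp_eq {m m' g : ℝ → ℝ} {a b K : ℝ}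
    (hm : ∀ t ∈ uIcc a b, HasDerivAt m (m' t) t) (hm' : ContinuousOn m' (uIcc a b))
    (hg : ContinuousOn g (m '' uIcc a b)) (hK : ∀ t ∈ uIcc a b, m' t * g (m t) = K) :
    ∫ M in m a..m b, g M = K * (b - a) := by
  rw [← integral_deriv_smul_comp' hm hm' hg, ← mul_comm (b - a), ← smul_eq_mul, ← integral_const]
  exact integral_congr fun t ht ↦ hK t ht

theorem eqOn_rpow_mul_rpow_mul_rpow_of_logDeriv {f g h f' g' h' : ℝ → ℝ} {p q r a b : ℝ}
    (hf : ∀ t ∈ Icc a b, HasDerivAt f (f' t) t) (hg : ∀ t ∈ Icc a b, HasDerivAt g (g' t) t)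
    (hh : ∀ t ∈ Icc a b, HasDerivAt h (h' t) t)
    (hpos : ∀ t ∈ Icc a b, 0 < f t ∧ 0 < g t ∧ 0 < h t)
    (hlog : ∀ t ∈ Icc a b, p * (f' t / f t) + q * (g' t / g t) + r * (h' t / h t) = 0) :
    ∀ t ∈ Icc a b, f t ^ p * g t ^ q * h t ^ r = f a ^ p * g a ^ q * h a ^ r := by
  set L := fun t ↦ p * log (f t) + q * log (g t) + r * log (h t)
  have hL : ∀ t ∈ Icc a b, HasDerivAt L 0 t := fun t ht ↦ by
    obtain ⟨hf₀, hg₀, hh₀⟩ := hpos t ht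
    rw [← hlog t ht]
    exact ((((hf t ht).log hf₀.ne').const_mul p).add
      (((hg t ht).log hg₀.ne').const_mul q)).add (((hh t ht).log hh₀.ne').const_mul r)
  have hL_const := constant_of_has_deriv_right_zero
    (fun t ht ↦ (hL t ht).continuousAt.continuousWithinAt)
    (fun t ht ↦ (hL t (Ico_subset_Icc_self ht)).hasDerivWithinAt)
  have hexp : ∀ t ∈ Icc a b, f t ^ p * g t ^ q * h t ^ r = exp (L t) := fun t ht ↦ by
    obtain ⟨hf₀, hg₀, hh₀⟩ := hpos t ht
    simp only [L, exp_add, rpow_def_of_pos hf₀, rpow_def_of_pos hg₀, rpow_def_of_pos hh₀,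
      mul_comm (log _)]
  intro t ht
  have ha : a ∈ Icc a b := ⟨le_rfl, ht.1.trans ht.2⟩
  rw [hexp t ht, hexp a ha, hL_const t ht]

theorem quadratic_pos {c₀ c₁ c₂ : ℝ} (hc₀ : 0 < c₀) (hdisc : c₁ ^ 2 < 4 * c₀ * c₂) (M : ℝ) :
    0 < c₀ + c₁ * M + c₂ * M ^ 2 := by
  nlinarith [sq_nonneg (2 * c₂ * M + c₁), sq_nonneg (2 * c₀ + c₁ * M)]

theorem continuousOn_rpow_mul_quadratic_rpow {c₀ c₁ c₂ : ℝ} (hc₀ : 0 < c₀)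
    (hdisc : c₁ ^ 2 < 4 * c₀ * c₂) (p s : ℝ) :
    ContinuousOn (fun M ↦ M ^ p * (c₀ + c₁ * M + c₂ * M ^ 2) ^ s) (Ioi 0) := fun M hM ↦
  ((continuousAt_rpow_const _ _ (Or.inl (ne_of_gt hM))).mul
    ((by fun_prop : Continuous fun M : ℝ ↦ c₀ + c₁ * M + c₂ * M ^ 2).continuousAt.rpow_const
      (Or.inl (quadratic_pos hc₀ hdisc M).ne'))).continuousWithinAt

theorem HasDerivAt.div_of_logDeriv {x y : ℝ → ℝ} {A B t : ℝ} (hx : HasDerivAt x (x t * A) t)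
    (hy : HasDerivAt y (-(y t * B)) t) (hx₀ : x t ≠ 0) :
    HasDerivAt (fun s ↦ y s / x s) (-(y t / x t * (A + B))) t := by
  refine (hy.div hx hx₀).congr_deriv ?_
  field_simp; ring

def quadForm (c₀ c₁ c₂ X Y : ℝ) : ℝ := c₀ * X ^ 2 + c₁ * X * Y + c₂ * Y ^ 2

section quadForm

variable {a₀ a₁ a₂ b₀ b₁ b₂ c₀ c₁ c₂ Δ : ℝ}

theorem quadForm_add (X Y : ℝ) :
    quadForm a₀ a₁ a₂ X Y + quadForm b₀ b₁ b₂ X Y = quadForm (a₀ + b₀) (a₁ + b₁) (a₂ + b₂) X Y := by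
  unfold quadForm; ring

theorem quadForm_eq_sq_mul {X : ℝ} (hX : X ≠ 0) (Y : ℝ) :
    quadForm c₀ c₁ c₂ X Y = X ^ 2 * (c₀ + c₁ * (Y / X) + c₂ * (Y / X) ^ 2) := by
  unfold quadForm; field_simp

theorem quadForm_pos (hc₀ : 0 < c₀) (hdisc : c₁ ^ 2 < 4 * c₀ * c₂) {X : ℝ} (hX : X ≠ 0) (Y : ℝ) :
    0 < quadForm c₀ c₁ c₂ X Y := by
  rw [quadForm_eq_sq_mul hX]
  exact mul_pos (by positivity) (quadratic_pos hc₀ hdisc _)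

theorem HasDerivAt.quadForm {x y : ℝ → ℝ} {A B t : ℝ} (hx : HasDerivAt x (x t * A) t)
    (hy : HasDerivAt y (-(y t * B)) t) :
    HasDerivAt (fun s ↦ quadForm c₀ c₁ c₂ (x s) (y s))
      (2 * c₀ * x t ^ 2 * A + c₁ * x t * y t * (A - B) - 2 * c₂ * y t ^ 2 * B) t := by
  unfold _root_.quadForm
  refine ((((hx.pow 2).const_mul c₀).add ((hx.const_mul c₁).mul hy)).add
    ((hy.pow 2).const_mul c₂)).congr_deriv ?_
  push_cast; ring

theorem div_mul_quadForm_mul_rpow {p q s X Y : ℝ} (hX : 0 < X) (hY : 0 < Y)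
    (hP : 0 < quadForm c₀ c₁ c₂ X Y) (hs : 2 * s = p + q) :
    Y / X * quadForm c₀ c₁ c₂ X Y *
        ((Y / X) ^ (q - 1) * (c₀ + c₁ * (Y / X) + c₂ * (Y / X) ^ 2) ^ (-s))
      = X ^ p * Y ^ q * quadForm c₀ c₁ c₂ X Y ^ (1 - s) := by
  have hQ : c₀ + c₁ * (Y / X) + c₂ * (Y / X) ^ 2 = quadForm c₀ c₁ c₂ X Y / X ^ 2 := by
    rw [quadForm_eq_sq_mul hX.ne']; field_simp
  rw [hQ]
  refine log_injOn_pos (mem_Ioi.2 (by positivity)) (mem_Ioi.2 (by positivity)) ?_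
  simp (disch := positivity) only [log_mul, log_rpow, log_div, log_pow]
  linear_combination (log X) * hs

theorem dulac_quadForm_identity (hc₀ : c₀ = a₀ + b₀) (hc₁ : c₁ = a₁ + b₁) (hc₂ : c₂ = a₂ + b₂)
    (hΔ : Δ = a₂ * b₀ - a₀ * b₂) (hL : b₁ * (2 * a₀ * c₂ + Δ) = a₁ * (2 * b₂ * c₀ + Δ))
    (X Y : ℝ) :
    quadForm c₀ c₁ c₂ X Y *
        (2 * b₂ * c₀ * quadForm a₀ a₁ a₂ X Y - 2 * a₀ * c₂ * quadForm b₀ b₁ b₂ X Y)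
      + Δ * (2 * c₀ * X ^ 2 * quadForm a₀ a₁ a₂ X Y
        + c₁ * X * Y * (quadForm a₀ a₁ a₂ X Y - quadForm b₀ b₁ b₂ X Y)
        - 2 * c₂ * Y ^ 2 * quadForm b₀ b₁ b₂ X Y) = 0 := by
  subst hc₀ hc₁ hc₂ hΔ
  unfold quadForm
  linear_combination (-(X * Y * ((a₀ + b₀) * X ^ 2 + (a₁ + b₁) * X * Y + (a₂ + b₂) * Y ^ 2))) * hL

theorem dulac_logDeriv_eq_zero {β₀ β₂ : ℝ} (hc₀ : c₀ = a₀ + b₀) (hc₁ : c₁ = a₁ + b₁)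
    (hc₂ : c₂ = a₂ + b₂) (hΔ : Δ = a₂ * b₀ - a₀ * b₂)
    (hβ₀ : β₀ = (a₀ + b₀) / (2 * a₀)) (hβ₂ : β₂ = (a₂ + b₂) / (2 * b₂))
    (hc₀₀ : c₀ ≠ 0) (hc₂₀ : c₂ ≠ 0) (hL : b₁ * (2 * a₀ * c₂ + Δ) = a₁ * (2 * b₂ * c₀ + Δ))
    {X Y : ℝ} (hP : quadForm c₀ c₁ c₂ X Y ≠ 0) :
    1 / β₂ * quadForm a₀ a₁ a₂ X Y + 1 / β₀ * -quadForm b₀ b₁ b₂ X Y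
      + (1 - 1 / (2 * β₀) - 1 / (2 * β₂)) *
        ((2 * c₀ * X ^ 2 * quadForm a₀ a₁ a₂ X Y
          + c₁ * X * Y * (quadForm a₀ a₁ a₂ X Y - quadForm b₀ b₁ b₂ X Y)
          - 2 * c₂ * Y ^ 2 * quadForm b₀ b₁ b₂ X Y) / quadForm c₀ c₁ c₂ X Y) = 0 := by
  rw [← hc₀] at hβ₀
  rw [← hc₂] at hβ₂
  have hr : 1 - 1 / (2 * β₀) - 1 / (2 * β₂) = Δ / (c₀ * c₂) := by
    rw [hβ₀, hβ₂, hΔ]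
    field_simp
    rw [hc₀, hc₂]
    ring
  rw [hr, hβ₀, hβ₂, one_div_div, one_div_div]
  field_simp
  linear_combination dulac_quadForm_identity hc₀ hc₁ hc₂ hΔ hL X Y

theorem dulac_firstIntegral_eqOn {β₀ β₂ t₀ t₁ : ℝ} {x y : ℝ → ℝ} (hc₀ : c₀ = a₀ + b₀)
    (hc₁ : c₁ = a₁ + b₁) (hc₂ : c₂ = a₂ + b₂) (hΔ : Δ = a₂ * b₀ - a₀ * b₂)
    (hβ₀ : β₀ = (a₀ + b₀) / (2 * a₀)) (hβ₂ : β₂ = (a₂ + b₂) / (2 * b₂))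
    (hc₀₀ : c₀ ≠ 0) (hc₂₀ : c₂ ≠ 0) (hL : b₁ * (2 * a₀ * c₂ + Δ) = a₁ * (2 * b₂ * c₀ + Δ))
    (hsol : ∀ t ∈ Icc t₀ t₁,
      HasDerivAt x (x t * quadForm a₀ a₁ a₂ (x t) (y t)) t ∧
      HasDerivAt y (-(y t * quadForm b₀ b₁ b₂ (x t) (y t))) t)
    (hpos : ∀ t ∈ Icc t₀ t₁, 0 < x t ∧ 0 < y t)
    (hP : ∀ t ∈ Icc t₀ t₁, 0 < quadForm c₀ c₁ c₂ (x t) (y t)) :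
    ∀ t ∈ Icc t₀ t₁,
      x t ^ (1 / β₂) * y t ^ (1 / β₀) *
          quadForm c₀ c₁ c₂ (x t) (y t) ^ (1 - 1 / (2 * β₀) - 1 / (2 * β₂))
        = x t₀ ^ (1 / β₂) * y t₀ ^ (1 / β₀) *
          quadForm c₀ c₁ c₂ (x t₀) (y t₀) ^ (1 - 1 / (2 * β₀) - 1 / (2 * β₂)) := by
  refine eqOn_rpow_mul_rpow_mul_rpow_of_logDeriv (fun t ht ↦ (hsol t ht).1)
    (fun t ht ↦ (hsol t ht).2) (fun t ht ↦ (hsol t ht).1.quadForm (hsol t ht).2)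
    (fun t ht ↦ ⟨(hpos t ht).1, (hpos t ht).2, hP t ht⟩) fun t ht ↦ ?_
  obtain ⟨hx, hy⟩ := hpos t ht
  rw [mul_div_cancel_left₀ _ hx.ne', neg_div, mul_div_cancel_left₀ _ hy.ne']
  exact dulac_logDeriv_eq_zero hc₀ hc₁ hc₂ hΔ hβ₀ hβ₂ hc₀₀ hc₂₀ hL (hP t ht).ne'

theorem integral_div_eq_of_firstIntegral_eq {p q s K t₀ t₁ : ℝ} {x y : ℝ → ℝ}
    (hc₀ : c₀ = a₀ + b₀) (hc₁ : c₁ = a₁ + b₁) (hc₂ : c₂ = a₂ + b₂) (hc₀pos : 0 < c₀)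
    (hdisc : c₁ ^ 2 < 4 * c₀ * c₂) (hs : 2 * s = p + q)
    (hsol : ∀ t ∈ uIcc t₀ t₁,
      HasDerivAt x (x t * quadForm a₀ a₁ a₂ (x t) (y t)) t ∧
      HasDerivAt y (-(y t * quadForm b₀ b₁ b₂ (x t) (y t))) t)
    (hpos : ∀ t ∈ uIcc t₀ t₁, 0 < x t ∧ 0 < y t)
    (hH : ∀ t ∈ uIcc t₀ t₁, x t ^ p * y t ^ q * quadForm c₀ c₁ c₂ (x t) (y t) ^ (1 - s) = K) :
    ∫ M in (y t₀ / x t₀)..(y t₁ / x t₁), M ^ (q - 1) * (c₀ + c₁ * M + c₂ * M ^ 2) ^ (-s)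
      = -K * (t₁ - t₀) := by
  have hP : ∀ t ∈ uIcc t₀ t₁, 0 < quadForm c₀ c₁ c₂ (x t) (y t) :=
    fun t ht ↦ quadForm_pos hc₀pos hdisc (hpos t ht).1.ne' _
  have hm : ∀ t ∈ uIcc t₀ t₁, HasDerivAt (fun s ↦ y s / x s)
      (-(y t / x t * quadForm c₀ c₁ c₂ (x t) (y t))) t := fun t ht ↦ by
    rw [hc₀, hc₁, hc₂, ← quadForm_add]
    exact (hsol t ht).1.div_of_logDeriv (hsol t ht).2 (hpos t ht).1.ne'
  have hm' : ContinuousOn (fun t ↦ -(y t / x t * quadForm c₀ c₁ c₂ (x t) (y t)))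
      (uIcc t₀ t₁) := by
    have hx : ContinuousOn x (uIcc t₀ t₁) :=
      fun t ht ↦ (hsol t ht).1.continuousAt.continuousWithinAt
    have hy : ContinuousOn y (uIcc t₀ t₁) :=
      fun t ht ↦ (hsol t ht).2.continuousAt.continuousWithinAt
    refine ((hy.div hx fun t ht ↦ (hpos t ht).1.ne').mul ?_).neg
    unfold _root_.quadForm
    fun_prop
  have hm_pos : (fun s ↦ y s / x s) '' uIcc t₀ t₁ ⊆ Ioi 0 := by
    rintro _ ⟨t, ht, rfl⟩
    exact div_pos (hpos t ht).2 (hpos t ht).1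
  refine integral_eq_mul_of_deriv_mul_comp_eq hm hm'
    ((continuousOn_rpow_mul_quadratic_rpow hc₀pos hdisc _ _).mono hm_pos) fun t ht ↦ ?_
  rw [neg_mul, div_mul_quadForm_mul_rpow (hpos t ht).1 (hpos t ht).2 (hP t ht) hs, hH t ht]

end quadForm

/-- Separation of variables for the Dulac passage: if `(x,y)` solves
`X` on `[0,T]`, stays positive, and connects `(ξ,η)` to `(ζ₀,ω)`, then
`∫_{ω/ζ₀}^{η/ξ} M^{1/β₀−1}(c₀+c₁M+c₂M²)^{−(1/(2β₀)+1/(2β₂))} dM = G(ξ,η) T`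
with `G(ξ,η) = ξ^{1/β₂} η^{1/β₀} (c₀ξ²+c₁ξη+c₂η²)^{1−1/(2β₀)−1/(2β₂)}`. -/
theorem dulac_time_integral_equation
    (a₀ a₁ a₂ b₀ b₁ b₂ : ℝ)
    (ha₀ : 0 < a₀) (ha₂ : 0 < a₂) (hb₀ : 0 < b₀) (hb₂ : 0 < b₂)
    (c₀ c₁ c₂ Δ u v β₀ β₂ : ℝ)
    (hc₀ : c₀ = a₀ + b₀) (hc₁ : c₁ = a₁ + b₁) (hc₂ : c₂ = a₂ + b₂)
    (hΔdef : Δ = a₂ * b₀ - a₀ * b₂) (hΔ : 0 < Δ)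
    (hdisc : c₁ ^ 2 < 4 * c₀ * c₂)
    (hu : u = 2 * b₂ * c₀ / Δ) (hv : v = 2 * a₀ * c₂ / Δ)
    (hβ₀ : β₀ = (a₀ + b₀) / (2 * a₀)) (hβ₂ : β₂ = (a₂ + b₂) / (2 * b₂))
    (hcondL : b₁ * (v + 1) = a₁ * (u + 1))
    (T : ℝ) (hT : 0 < T)
    (x y : ℝ → ℝ)
    (hsol : ∀ t ∈ Set.Icc (0 : ℝ) T,
      HasDerivAt x (x t * (a₀ * x t ^ 2 + a₁ * x t * y t + a₂ * y t ^ 2)) t ∧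
      HasDerivAt y (-(y t * (b₀ * x t ^ 2 + b₁ * x t * y t + b₂ * y t ^ 2))) t)
    (hpos : ∀ t ∈ Set.Icc (0 : ℝ) T, 0 < x t ∧ 0 < y t)
    (ξ η ζ₀ ω : ℝ)
    (hx0 : x 0 = ξ) (hy0 : y 0 = η) (hxT : x T = ζ₀) (hyT : y T = ω) :
    ∫ M in (ω / ζ₀)..(η / ξ),
        M ^ (1 / β₀ - 1) *
          (c₀ + c₁ * M + c₂ * M ^ 2) ^ (-(1 / (2 * β₀) + 1 / (2 * β₂)))
      = ξ ^ (1 / β₂) * η ^ (1 / β₀) *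
          (c₀ * ξ ^ 2 + c₁ * ξ * η + c₂ * η ^ 2) ^ (1 - 1 / (2 * β₀) - 1 / (2 * β₂))
        * T := by
  subst hx0 hy0 hxT hyT
  have hc₀pos : 0 < c₀ := hc₀ ▸ add_pos ha₀ hb₀
  have hc₂pos : 0 < c₂ := hc₂ ▸ add_pos ha₂ hb₂
  have hL : b₁ * (2 * a₀ * c₂ + Δ) = a₁ * (2 * b₂ * c₀ + Δ) := by
    rw [hu, hv] at hcondL
    field_simp at hcondL
    linear_combination hcondL
  have hH := dulac_firstIntegral_eqOn hc₀ hc₁ hc₂ hΔdef hβ₀ hβ₂ hc₀pos.ne' hc₂pos.ne' hL hsol hpos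
    fun t ht ↦ quadForm_pos hc₀pos hdisc (hpos t ht).1.ne' _
  rw [← uIcc_of_le hT.le] at hsol hpos hH
  simp only [sub_sub] at hH
  rw [integral_symm, integral_div_eq_of_firstIntegral_eq hc₀ hc₁ hc₂ hc₀pos hdisc
    (by ring : 2 * (1 / (2 * β₀) + 1 / (2 * β₂)) = 1 / β₂ + 1 / β₀) hsol hpos hH, sub_sub]
  unfold quadForm
  ring
end

section
/- Assume Δ > 0 and condition (condL). Let T > 0 and let (x,y) be a solution of X on [0,T] with x(t), y(t) > 0 for all t, x(0) = ξ, y(0) = η, x(T) = ζ₀, y(T) = ω. Then ξ^u · η^v · (c₀ξ² + c₁ξη + c₂η²) = ζ₀^u · ω^v · (c₀ζ₀² + c₁ζ₀ω + c₂ω²). -/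
/-!
Along `X`, the logarithmic derivative of `H = x^u y^v Q`, `Q = c₀x² + c₁xy + c₂y²`, is
`((u A − v B) Q + x Q_x A − y Q_y B) / Q`, where `x' = x A` and `y' = −y B`. For the given `u`,
`v` and under (condL) this numerator vanishes identically as a quartic form in `x, y`; so `H`
has zero derivative along any positive solution on `[0, T]` and takes the same value at both ends.
-/

open Set

noncomputable def firstIntegral (c₀ c₁ c₂ u v p q : ℝ) : ℝ :=
  p ^ u * q ^ v * (c₀ * p ^ 2 + c₁ * p * q + c₂ * q ^ 2)

theorem firstIntegral_numerator_eq_zero (a₀ a₁ a₂ b₀ b₁ b₂ c₀ c₁ c₂ Δ u v p q : ℝ)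
    (hc₀ : c₀ = a₀ + b₀) (hc₁ : c₁ = a₁ + b₁) (hc₂ : c₂ = a₂ + b₂)
    (hΔdef : Δ = a₂ * b₀ - a₀ * b₂) (hΔ : Δ ≠ 0)
    (hu : u * Δ = 2 * b₂ * c₀) (hv : v * Δ = 2 * a₀ * c₂)
    (hcondL : b₁ * (v + 1) = a₁ * (u + 1)) :
    (u * (a₀ * p ^ 2 + a₁ * p * q + a₂ * q ^ 2) - v * (b₀ * p ^ 2 + b₁ * p * q + b₂ * q ^ 2))
        * (c₀ * p ^ 2 + c₁ * p * q + c₂ * q ^ 2)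
      + p * (2 * c₀ * p + c₁ * q) * (a₀ * p ^ 2 + a₁ * p * q + a₂ * q ^ 2)
      - q * (c₁ * p + 2 * c₂ * q) * (b₀ * p ^ 2 + b₁ * p * q + b₂ * q ^ 2) = 0 := by
  have hcond : b₁ * (2 * a₀ * c₂ + Δ) = a₁ * (2 * b₂ * c₀ + Δ) := by
    linear_combination Δ * hcondL - b₁ * hv + a₁ * hu
  subst hc₀ hc₁ hc₂ hΔdef
  refine (mul_eq_zero.mp ?_).resolve_left hΔ
  linear_combination
    ((a₀ * p ^ 2 + a₁ * p * q + a₂ * q ^ 2)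
        * ((a₀ + b₀) * p ^ 2 + (a₁ + b₁) * p * q + (a₂ + b₂) * q ^ 2)) * hu
      - ((b₀ * p ^ 2 + b₁ * p * q + b₂ * q ^ 2)
        * ((a₀ + b₀) * p ^ 2 + (a₁ + b₁) * p * q + (a₂ + b₂) * q ^ 2)) * hv
      - (p * q * ((a₀ + b₀) * p ^ 2 + (a₁ + b₁) * p * q + (a₂ + b₂) * q ^ 2)) * hcond

theorem hasDerivAt_firstIntegral (c₀ c₁ c₂ u v : ℝ) {x y : ℝ → ℝ} {x' y' t : ℝ}
    (hx : HasDerivAt x x' t) (hy : HasDerivAt y y' t) (hxt : 0 < x t) (hyt : 0 < y t) :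
    HasDerivAt (fun s ↦ firstIntegral c₀ c₁ c₂ u v (x s) (y s))
      (x t ^ (u - 1) * y t ^ (v - 1) *
        ((u * x' * y t + v * x t * y') * (c₀ * x t ^ 2 + c₁ * x t * y t + c₂ * y t ^ 2)
          + x t * y t * ((2 * c₀ * x t + c₁ * y t) * x' + (c₁ * x t + 2 * c₂ * y t) * y'))) t := by
  have hQ := (((hx.pow 2).const_mul c₀).add ((hx.const_mul c₁).mul hy)).add
    ((hy.pow 2).const_mul c₂)
  refine (((hx.rpow_const (p := u) (Or.inl hxt.ne')).mul
    (hy.rpow_const (p := v) (Or.inl hyt.ne'))).mul hQ).congr_deriv ?_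
  simp only [Pi.mul_apply, Pi.add_apply, Pi.pow_apply]
  rw [Real.rpow_sub_one hxt.ne', Real.rpow_sub_one hyt.ne']
  field_simp
  ring

theorem eq_of_hasDerivAt_zero_on_Icc {f : ℝ → ℝ} {a b : ℝ} (hab : a ≤ b)
    (hf : ∀ t ∈ Icc a b, HasDerivAt f 0 t) : f a = f b :=
  (constant_of_has_deriv_right_zero (fun t ht ↦ (hf t ht).continuousAt.continuousWithinAt)
    (fun t ht ↦ (hf t (Ico_subset_Icc_self ht)).hasDerivWithinAt) b
    (right_mem_Icc.mpr hab)).symm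

theorem level_set_conservation_general
    (a₀ a₁ a₂ b₀ b₁ b₂ : ℝ)
    (c₀ c₁ c₂ Δ u v : ℝ)
    (hc₀ : c₀ = a₀ + b₀) (hc₁ : c₁ = a₁ + b₁) (hc₂ : c₂ = a₂ + b₂)
    (hΔdef : Δ = a₂ * b₀ - a₀ * b₂) (hΔ : 0 < Δ)
    (hu : u = 2 * b₂ * c₀ / Δ) (hv : v = 2 * a₀ * c₂ / Δ)
    (hcondL : b₁ * (v + 1) = a₁ * (u + 1))
    (T : ℝ) (hT : 0 < T)
    (x y : ℝ → ℝ)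
    (hsol : ∀ t ∈ Set.Icc (0 : ℝ) T,
      HasDerivAt x (x t * (a₀ * x t ^ 2 + a₁ * x t * y t + a₂ * y t ^ 2)) t ∧
      HasDerivAt y (-(y t * (b₀ * x t ^ 2 + b₁ * x t * y t + b₂ * y t ^ 2))) t)
    (hpos : ∀ t ∈ Set.Icc (0 : ℝ) T, 0 < x t ∧ 0 < y t)
    (ξ η ζ₀ ω : ℝ)
    (hx0 : x 0 = ξ) (hy0 : y 0 = η) (hxT : x T = ζ₀) (hyT : y T = ω) :
    ξ ^ u * η ^ v * (c₀ * ξ ^ 2 + c₁ * ξ * η + c₂ * η ^ 2)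
      = ζ₀ ^ u * ω ^ v * (c₀ * ζ₀ ^ 2 + c₁ * ζ₀ * ω + c₂ * ω ^ 2) := by
  have huΔ : u * Δ = 2 * b₂ * c₀ := by rw [hu, div_mul_cancel₀ _ hΔ.ne']
  have hvΔ : v * Δ = 2 * a₀ * c₂ := by rw [hv, div_mul_cancel₀ _ hΔ.ne']
  have hconst : ∀ t ∈ Icc 0 T,
      HasDerivAt (fun s ↦ firstIntegral c₀ c₁ c₂ u v (x s) (y s)) 0 t := by
    intro t ht
    obtain ⟨hx, hy⟩ := hsol t ht
    obtain ⟨hxt, hyt⟩ := hpos t ht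
    convert hasDerivAt_firstIntegral c₀ c₁ c₂ u v hx hy hxt hyt using 1
    linear_combination (-(x t ^ (u - 1) * y t ^ (v - 1) * x t * y t)) *
      firstIntegral_numerator_eq_zero a₀ a₁ a₂ b₀ b₁ b₂ c₀ c₁ c₂ Δ u v (x t) (y t)
        hc₀ hc₁ hc₂ hΔdef hΔ.ne' huΔ hvΔ hcondL
  simpa only [firstIntegral, hx0, hy0, hxT, hyT] using
    eq_of_hasDerivAt_zero_on_Icc hT.le hconst

/-- Conservation of the first integral along Dulac orbits:
if `(x,y)` solves `X` on `[0,T]`, stays positive, and connects `(ξ,η)` to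
`(ζ₀,ω)`, then `ξ^u η^v (c₀ξ² + c₁ξη + c₂η²) = ζ₀^u ω^v (c₀ζ₀² + c₁ζ₀ω + c₂ω²)`. -/
theorem level_set_conservation
    (a₀ a₁ a₂ b₀ b₁ b₂ : ℝ)
    (ha₀ : 0 < a₀) (ha₂ : 0 < a₂) (hb₀ : 0 < b₀) (hb₂ : 0 < b₂)
    (c₀ c₁ c₂ Δ u v : ℝ)
    (hc₀ : c₀ = a₀ + b₀) (hc₁ : c₁ = a₁ + b₁) (hc₂ : c₂ = a₂ + b₂)
    (hΔdef : Δ = a₂ * b₀ - a₀ * b₂) (hΔ : 0 < Δ)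
    (hdisc : c₁ ^ 2 < 4 * c₀ * c₂)
    (hu : u = 2 * b₂ * c₀ / Δ) (hv : v = 2 * a₀ * c₂ / Δ)
    (hcondL : b₁ * (v + 1) = a₁ * (u + 1))
    (T : ℝ) (hT : 0 < T)
    (x y : ℝ → ℝ)
    (hsol : ∀ t ∈ Set.Icc (0 : ℝ) T,
      HasDerivAt x (x t * (a₀ * x t ^ 2 + a₁ * x t * y t + a₂ * y t ^ 2)) t ∧
      HasDerivAt y (-(y t * (b₀ * x t ^ 2 + b₁ * x t * y t + b₂ * y t ^ 2))) t)
    (hpos : ∀ t ∈ Set.Icc (0 : ℝ) T, 0 < x t ∧ 0 < y t)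
    (ξ η ζ₀ ω : ℝ)
    (hx0 : x 0 = ξ) (hy0 : y 0 = η) (hxT : x T = ζ₀) (hyT : y T = ω) :
    ξ ^ u * η ^ v * (c₀ * ξ ^ 2 + c₁ * ξ * η + c₂ * η ^ 2)
      = ζ₀ ^ u * ω ^ v * (c₀ * ζ₀ ^ 2 + c₁ * ζ₀ * ω + c₂ * ω ^ 2) :=
  level_set_conservation_general a₀ a₁ a₂ b₀ b₁ b₂ c₀ c₁ c₂ Δ u v hc₀ hc₁ hc₂ hΔdef hΔ hu hv hcondL
    T hT x y hsol hpos ξ η ζ₀ ω hx0 hy0 hxT hyT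
end

section
/- (Leading coefficient of the Dulac map.) Assume Δ > 0 and fix ζ₀, η > 0. Then for every ε > 0 there exists δ > 0 such that for all ξ, ω ∈ (0, δ) satisfying the level-set relation ξ^u · η^v · (c₀ξ² + c₁ξη + c₂η²) = ζ₀^u · ω^v · (c₀ζ₀² + c₁ζ₀ω + c₂ω²), one has |ω · ξ^{−u/v} − (c₂ η^{v+2} / (c₀ ζ₀^{u+2}))^{1/v}| < ε. In other words, along level sets of the first integral, ω ~ (c₂η^{v+2}/(c₀ζ₀^{u+2}))^{1/v} · ξ^{u/v} as ξ → 0⁺. -/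
/-! On the level set, `ω ^ v = ξ ^ u · F (ξ, ω)` with
`F (ξ, ω) = η ^ v Q(ξ, η) / (ζ₀ ^ u Q(ζ₀, ω))` and `Q` the positive definite form
`c₀ x² + c₁ x y + c₂ y²`. Hence `ω ξ ^ (-u/v) = F (ξ, ω) ^ (1/v)`, and `F` is continuous
at the origin with `F (0, 0) = c₂ η ^ (v + 2) / (c₀ ζ₀ ^ (u + 2))`. -/

open Real

lemma binary_quadratic_pos_of_discrim_neg {c₀ c₁ c₂ x : ℝ} (hc₀ : 0 < c₀)
    (hdisc : c₁ ^ 2 < 4 * c₀ * c₂) (hx : x ≠ 0) (y : ℝ) :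
    0 < c₀ * x ^ 2 + c₁ * x * y + c₂ * y ^ 2 := by
  have hc₂ : 0 < c₂ := by nlinarith [sq_nonneg c₁]
  have hx2 : 0 < x ^ 2 := by positivity
  -- `4 c₂ Q(x, y) = (c₁ x + 2 c₂ y)² + (4 c₀ c₂ - c₁²) x²`
  nlinarith [sq_nonneg (c₁ * x + 2 * c₂ * y), mul_pos (sub_pos.2 hdisc) hx2]

lemma mul_rpow_neg_div_eq_of_rpow_eq {ω ξ u v F : ℝ} (hω : 0 ≤ ω) (hξ : 0 < ξ) (hF : 0 ≤ F)
    (hv : v ≠ 0) (h : ω ^ v = ξ ^ u * F) :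
    ω * ξ ^ (-(u / v)) = F ^ (1 / v) := by
  have hω_eq : ω = ξ ^ (u / v) * F ^ (1 / v) := by
    rw [← rpow_rpow_inv hω hv, h, mul_rpow (rpow_nonneg hξ.le u) hF, ← rpow_mul hξ.le,
      one_div, div_eq_mul_inv]
  rw [hω_eq, mul_right_comm, ← rpow_add hξ, add_neg_cancel, rpow_zero, one_mul]

lemma ContinuousAt.exists_forall_abs_lt_abs_sub_lt {f : ℝ × ℝ → ℝ} (hf : ContinuousAt f (0, 0))
    {ε : ℝ} (hε : 0 < ε) :
    ∃ δ > 0, ∀ x y : ℝ, |x| < δ → |y| < δ → |f (x, y) - f (0, 0)| < ε := by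
  obtain ⟨δ, hδ, hfδ⟩ := Metric.continuousAt_iff.mp hf ε hε
  refine ⟨δ, hδ, fun x y hx hy => ?_⟩
  have hxy : dist (x, y) ((0 : ℝ), (0 : ℝ)) < δ := by
    simpa only [Prod.dist_eq, Real.dist_eq, sub_zero] using max_lt hx hy
  simpa only [Real.dist_eq] using hfδ hxy

theorem dulac_map_leading_coefficient_general
    (a₀ a₂ b₀ b₂ : ℝ)
    (ha₀ : 0 < a₀) (ha₂ : 0 < a₂) (hb₀ : 0 < b₀) (hb₂ : 0 < b₂)
    (c₀ c₁ c₂ Δ u v : ℝ)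
    (hc₀ : c₀ = a₀ + b₀) (hc₂ : c₂ = a₂ + b₂)
    (hΔ : 0 < Δ)
    (hdisc : c₁ ^ 2 < 4 * c₀ * c₂)
    (hv : v = 2 * a₀ * c₂ / Δ)
    (ζ₀ η : ℝ) (hζ₀ : 0 < ζ₀) (hη : 0 < η) :
    ∀ ε > 0, ∃ δ > 0, ∀ ξ ω : ℝ, ξ ∈ Set.Ioo (0 : ℝ) δ → ω ∈ Set.Ioo (0 : ℝ) δ →
      ξ ^ u * η ^ v * (c₀ * ξ ^ 2 + c₁ * ξ * η + c₂ * η ^ 2)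
        = ζ₀ ^ u * ω ^ v * (c₀ * ζ₀ ^ 2 + c₁ * ζ₀ * ω + c₂ * ω ^ 2) →
      |ω * ξ ^ (-(u / v)) -
        (c₂ * η ^ (v + 2) / (c₀ * ζ₀ ^ (u + 2))) ^ (1 / v)| < ε := by
  have hc₀' : 0 < c₀ := by rw [hc₀]; positivity
  have hc₂' : 0 < c₂ := by rw [hc₂]; positivity
  have hv' : 0 < v := by rw [hv]; positivity
  have hQ {x : ℝ} (hx : 0 < x) (y : ℝ) := binary_quadratic_pos_of_discrim_neg hc₀' hdisc hx.ne' y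
  set F : ℝ × ℝ → ℝ := fun p => η ^ v * (c₀ * p.1 ^ 2 + c₁ * p.1 * η + c₂ * η ^ 2) /
    (ζ₀ ^ u * (c₀ * ζ₀ ^ 2 + c₁ * ζ₀ * p.2 + c₂ * p.2 ^ 2)) with hF_def
  have hF_pos {ξ : ℝ} (hξ : 0 < ξ) (ω : ℝ) : 0 < F (ξ, ω) :=
    div_pos (mul_pos (rpow_pos_of_pos hη v) (hQ hξ η))
      (mul_pos (rpow_pos_of_pos hζ₀ u) (hQ hζ₀ ω))
  have hF_cont : ContinuousAt (fun p => F p ^ (1 / v)) (0, 0) := by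
    refine ContinuousAt.rpow_const ?_ (Or.inr (by positivity))
    exact ContinuousAt.div (by fun_prop) (by fun_prop)
      (mul_pos (rpow_pos_of_pos hζ₀ u) (hQ hζ₀ 0)).ne'
  have hF_zero : F (0, 0) = c₂ * η ^ (v + 2) / (c₀ * ζ₀ ^ (u + 2)) := by
    simp only [hF_def, rpow_add hη, rpow_add hζ₀, rpow_two]
    ring
  intro ε hε
  obtain ⟨δ, hδ, hFδ⟩ := hF_cont.exists_forall_abs_lt_abs_sub_lt hε
  refine ⟨δ, hδ, fun ξ ω hξ hω hrel => ?_⟩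
  have hω_pow : ω ^ v = ξ ^ u * F (ξ, ω) := by
    rw [hF_def, ← mul_div_assoc, eq_div_iff (mul_pos (rpow_pos_of_pos hζ₀ u) (hQ hζ₀ ω)).ne']
    linear_combination -hrel
  rw [mul_rpow_neg_div_eq_of_rpow_eq hω.1.le hξ.1 (hF_pos hξ.1 ω).le hv'.ne' hω_pow, ← hF_zero]
  exact hFδ ξ ω ((abs_of_pos hξ.1).trans_lt hξ.2) ((abs_of_pos hω.1).trans_lt hω.2)

/-- (Leading coefficient of the Dulac map.) For `Δ > 0`, along
level sets of the first integral, `ω ∼ (c₂ η^{v+2}/(c₀ ζ₀^{u+2}))^{1/v} · ξ^{u/v}`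
as `ξ → 0⁺`. -/
theorem dulac_map_leading_coefficient
    (a₀ a₁ a₂ b₀ b₁ b₂ : ℝ)
    (ha₀ : 0 < a₀) (ha₂ : 0 < a₂) (hb₀ : 0 < b₀) (hb₂ : 0 < b₂)
    (c₀ c₁ c₂ Δ u v : ℝ)
    (hc₀ : c₀ = a₀ + b₀) (hc₁ : c₁ = a₁ + b₁) (hc₂ : c₂ = a₂ + b₂)
    (hΔdef : Δ = a₂ * b₀ - a₀ * b₂) (hΔ : 0 < Δ)
    (hdisc : c₁ ^ 2 < 4 * c₀ * c₂)
    (hu : u = 2 * b₂ * c₀ / Δ) (hv : v = 2 * a₀ * c₂ / Δ)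
    (ζ₀ η : ℝ) (hζ₀ : 0 < ζ₀) (hη : 0 < η) :
    ∀ ε > 0, ∃ δ > 0, ∀ ξ ω : ℝ, ξ ∈ Set.Ioo (0 : ℝ) δ → ω ∈ Set.Ioo (0 : ℝ) δ →
      ξ ^ u * η ^ v * (c₀ * ξ ^ 2 + c₁ * ξ * η + c₂ * η ^ 2)
        = ζ₀ ^ u * ω ^ v * (c₀ * ζ₀ ^ 2 + c₁ * ζ₀ * ω + c₂ * ω ^ 2) →
      |ω * ξ ^ (-(u / v)) -
        (c₂ * η ^ (v + 2) / (c₀ * ζ₀ ^ (u + 2))) ^ (1 / v)| < ε :=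
  dulac_map_leading_coefficient_general a₀ a₂ b₀ b₂ ha₀ ha₂ hb₀ hb₂ c₀ c₁ c₂ Δ u v hc₀ hc₂ hΔ hdisc
    hv ζ₀ η hζ₀ hη
end
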